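/- Let k ∈ ℕ, let f_1, …, f_k : S → ℝ be continuous, and let φ(λ) = Π_{i=1}^k ⟨f_i, λ⟩. Then for every ξ ∈ S^E, L_μ(φ ∘ m)(ξ) = Σ_{A ⊆ {1,…,k}, |A| ≥ 1} φ_{A^c}(m(ξ)) · Σ_{x ∈ E} π(x)^{|A|} ∫_S Δ^φ_A(σ, ξ(x)) dμ(σ). -/
import Mathlib


open MeasureTheory Finset

/-- Empirical measure `m(ξ) = ∑_{x∈E} π(x) δ_{ξ(x)}`. -/
noncomputable def empMeas {E S : Type*} [Fintype E] [MeasurableSpace S]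
    (π : E → ℝ) (ξ : E → S) : Measure S :=
  ∑ x : E, (ENNReal.ofReal (π x)) • Measure.dirac (ξ x)

/-- Mutation generator `L_μ F(ξ) = ∑_{x∈E} ∫_S [F(ξ^{x|σ}) − F(ξ)] dμ(σ)`. -/
noncomputable def Lmu {E S : Type*} [Fintype E] [DecidableEq E] [MeasurableSpace S]
    (μ : Measure S) (F : (E → S) → ℝ) (ξ : E → S) : ℝ :=
  ∑ x : E, ∫ σ, (F (Function.update ξ x σ) - F ξ) ∂μ

lemma integral_empMeas {E S : Type*} [Fintype E] [MetricSpace S] [CompactSpace S] [MeasurableSpace S] [BorelSpace S]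
    (π : E → ℝ) (hπ : ∀ x, 0 ≤ π x) (ξ : E → S) (g : S → ℝ) (hg : Continuous g) :
    ∫ σ, g σ ∂(empMeas π ξ) = ∑ x, π x * g (ξ x) := by
  rw [empMeas, integral_finset_sum_measure]
  · refine Finset.sum_congr rfl fun x _ => ?_
    rw [integral_smul_measure, integral_dirac' _ _ hg.stronglyMeasurable,
      ENNReal.toReal_ofReal (hπ x), smul_eq_mul]
  · intro x _
    refine Integrable.smul_measure ?_ ENNReal.ofReal_ne_top
    have : IsFiniteMeasure (Measure.dirac (ξ x)) := inferInstance
    exact integrableOn_univ.mp (hg.continuousOn.integrableOn_compact isCompact_univ)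

/-- Proposition 2.1, mutation part (eq. 2.7): for `φ(λ) = ∏_{i=1}^k ⟨f_i, λ⟩`,
`L_μ(φ∘m)(ξ) = ∑_{A ⊆ {1,…,k}, |A|≥1} φ_{Aᶜ}(m(ξ)) ∑_{x} π(x)^{|A|} ∫ Δ^φ_A(σ,ξ(x)) dμ(σ)`. -/
theorem mutation_generator_on_empirical_products
    {E S : Type*} [Fintype E] [DecidableEq E]
    [MetricSpace S] [CompactSpace S] [MeasurableSpace S] [BorelSpace S]
    (hE : 2 ≤ Fintype.card E)
    (q : E → E → ℝ) (π : E → ℝ) (μ : Measure S) [IsFiniteMeasure μ]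
    (hq0 : ∀ x y, 0 ≤ q x y) (hq1 : ∀ x, ∑ y, q x y = 1)
    (hqdiag : ∀ x, q x x = 0)
    (hirr : ∀ x y : E, ∃ n : ℕ, 0 < ((Matrix.of q) ^ n) x y)
    (hπpos : ∀ x, 0 < π x) (hπ1 : ∑ x, π x = 1)
    (hπstat : ∀ y, ∑ x, π x * q x y = π y)
    (k : ℕ) (f : Fin k → C(S, ℝ)) (ξ : E → S) :
    Lmu μ (fun ζ => ∏ i : Fin k, ∫ σ, f i σ ∂(empMeas π ζ)) ξ =
      ∑ A ∈ Finset.univ.powerset.filter (fun A : Finset (Fin k) => 1 ≤ A.card),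
        (∏ i ∈ Aᶜ, ∫ σ, f i σ ∂(empMeas π ξ)) *
          ∑ x : E, π x ^ A.card *
            ∫ σ, (∏ i ∈ A, (f i σ - f i (ξ x))) ∂μ := by
  have hπ : ∀ x, 0 ≤ π x := fun x => (hπpos x).le
  set a : Fin k → ℝ := fun i => ∑ y, π y * f i (ξ y) with ha
  have hint : ∀ (ζ : E → S) (i : Fin k),
      ∫ σ, f i σ ∂(empMeas π ζ) = ∑ y, π y * f i (ζ y) :=
    fun ζ i => integral_empMeas π hπ ζ (f i) (f i).continuous
  have hupd : ∀ (x : E) (σ : S) (i : Fin k),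
      ∑ y, π y * f i (Function.update ξ x σ y) = a i + π x * (f i σ - f i (ξ x)) := by
    intro x σ i
    have h1 : ∀ y, π y * f i (Function.update ξ x σ y)
        = Function.update (fun y => π y * f i (ξ y)) x (π x * f i σ) y := by
      intro y
      rcases eq_or_ne y x with h | h
      · subst h; simp
      · simp [Function.update_of_ne h]
    rw [Finset.sum_congr rfl fun y _ => h1 y,
      Finset.sum_update_of_mem (Finset.mem_univ x)]
    have h2 : ∑ y ∈ univ \ {x}, π y * f i (ξ y)
        = (∑ y, π y * f i (ξ y)) - π x * f i (ξ x) := by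
      rw [Finset.sum_sdiff_eq_sub (Finset.singleton_subset_iff.mpr (Finset.mem_univ x)),
        Finset.sum_singleton]
    rw [h2, ha]; ring
  have hDcont : ∀ (c : S) (A : Finset (Fin k)),
      Continuous fun σ => ∏ i ∈ A, (f i σ - f i c) :=
    fun c A => continuous_finset_prod A fun i _ => ((f i).continuous.sub continuous_const)
  have hDint : ∀ (c : S) (A : Finset (Fin k)),
      Integrable (fun σ => ∏ i ∈ A, (f i σ - f i c)) μ := fun c A =>
    integrableOn_univ.mp ((hDcont c A).continuousOn.integrableOn_compact isCompact_univ)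
  have hexp : ∀ (x : E) (σ : S),
      (∏ i : Fin k, ∫ τ, f i τ ∂(empMeas π (Function.update ξ x σ)))
        = ∑ A ∈ (univ : Finset (Fin k)).powerset,
            (π x ^ A.card * ∏ i ∈ A, (f i σ - f i (ξ x))) * ∏ i ∈ univ \ A, a i := by
    intro x σ
    have h3 : (∏ i : Fin k, ∫ τ, f i τ ∂(empMeas π (Function.update ξ x σ)))
        = ∏ i : Fin k, (π x * (f i σ - f i (ξ x)) + a i) := by
      refine Finset.prod_congr rfl fun i _ => ?_
      rw [hint, hupd]; ring
    rw [h3, Finset.prod_add]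
    refine Finset.sum_congr rfl fun A _ => ?_
    rw [Finset.prod_mul_distrib, Finset.prod_const]
  have hsplit : (univ : Finset (Fin k)).powerset.filter (fun A => ¬ 1 ≤ A.card) = {∅} := by
    ext A
    simp [Nat.lt_one_iff, Finset.card_eq_zero]
  have hFξ : (∏ i : Fin k, ∫ σ, f i σ ∂(empMeas π ξ)) = ∏ i : Fin k, a i :=
    Finset.prod_congr rfl fun i _ => hint ξ i
  have key : ∀ x : E,
      (∫ σ, ((∏ i : Fin k, ∫ τ, f i τ ∂(empMeas π (Function.update ξ x σ)))
          - ∏ i : Fin k, ∫ τ, f i τ ∂(empMeas π ξ)) ∂μ)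
        = ∑ A ∈ Finset.univ.powerset.filter (fun A : Finset (Fin k) => 1 ≤ A.card),
            (π x ^ A.card * ∫ σ, (∏ i ∈ A, (f i σ - f i (ξ x))) ∂μ) * ∏ i ∈ univ \ A, a i := by
    intro x
    have h4 : ∀ σ : S,
        ((∏ i : Fin k, ∫ τ, f i τ ∂(empMeas π (Function.update ξ x σ)))
          - ∏ i : Fin k, ∫ τ, f i τ ∂(empMeas π ξ))
        = ∑ A ∈ Finset.univ.powerset.filter (fun A : Finset (Fin k) => 1 ≤ A.card),
            (π x ^ A.card * ∏ i ∈ A, (f i σ - f i (ξ x))) * ∏ i ∈ univ \ A, a i := by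
      intro σ
      rw [hexp, hFξ, ← Finset.sum_filter_add_sum_filter_not _
        (fun A : Finset (Fin k) => 1 ≤ A.card), hsplit]
      simp
    rw [integral_congr_ae (Filter.Eventually.of_forall h4), integral_finset_sum]
    · refine Finset.sum_congr rfl fun A _ => ?_
      have h5 : (fun σ => (π x ^ A.card * ∏ i ∈ A, (f i σ - f i (ξ x))) * ∏ i ∈ univ \ A, a i)
          = fun σ => (π x ^ A.card * ∏ i ∈ univ \ A, a i) * ∏ i ∈ A, (f i σ - f i (ξ x)) := by
        funext σ; ring
      rw [h5, integral_const_mul]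
      ring
    · intro A _
      exact (((hDint (ξ x) A).const_mul _).mul_const _)
  show (∑ x : E, ∫ σ, ((∏ i : Fin k, ∫ τ, f i τ ∂(empMeas π (Function.update ξ x σ)))
      - ∏ i : Fin k, ∫ τ, f i τ ∂(empMeas π ξ)) ∂μ) = _
  rw [Finset.sum_congr rfl fun x _ => key x, Finset.sum_comm]
  refine Finset.sum_congr rfl fun A _ => ?_
  rw [Finset.compl_eq_univ_sdiff,
    show (∏ i ∈ univ \ A, ∫ σ, f i σ ∂(empMeas π ξ)) = ∏ i ∈ univ \ A, a i from
      Finset.prod_congr rfl fun i _ => hint ξ i, Finset.mul_sum]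
  exact Finset.sum_congr rfl fun x _ => by ring
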